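/- Matrices obtained from the blowup Construction (B^(ℓ) = [C^(ℓ) D^(ℓ) E^(ℓ)]) using a Strongly Order-Regular building block B with an odd number of rows M are Order-Regular, with m_ℓ = M^ℓ rows and n_ℓ = ℓ·N + 2(ℓ-1) columns. -/

import Mathlib

/-- Successor row index, saturating at the last row (convention `A[m+1] = A[m]`). -/
def rowSucc {m : ℕ} (i : Fin m) : Fin m :=
  if h : i.1 + 1 < m then ⟨i.1 + 1, h⟩ else i

/-- The matrix `A` satisfies the Order-Regularity constraint for the pair of rows `(i, j)`:
there is a column `k` with `A[i,k] ≠ A[i+1,k] = A[j,k] = A[j+1,k]`. -/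
def SatCon {m n : ℕ} (A : Fin m → Fin n → Bool) (i j : Fin m) : Prop :=
  ∃ k : Fin n, A i k ≠ A (rowSucc i) k ∧ A (rowSucc i) k = A j k ∧ A j k = A (rowSucc j) k

/-- Order-Regularity: every pair of rows `i < j` satisfies the constraint, and the last two
rows are distinct. -/
def OrderRegular {m n : ℕ} (A : Fin m → Fin n → Bool) : Prop :=
  (∀ i j : Fin m, i < j → SatCon A i j) ∧
  ∀ _h : 2 ≤ m, A ⟨m - 2, by omega⟩ ≠ A ⟨m - 1, by omega⟩

def SORcond2 {m n : ℕ} (A : Fin m → Fin n → Bool) : Prop :=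
  ∀ i j : Fin m, i.1 + 1 < j.1 → ∃ k : Fin n,
    A i k ≠ A (rowSucc i) k ∧ A (rowSucc i) k ≠ A j k ∧ A j k = A (rowSucc j) k

def StronglyOrderRegular {m n : ℕ} (A : Fin m → Fin n → Bool) : Prop :=
  OrderRegular A ∧ SORcond2 A

/-- The blowup construction `B^(ℓ) = [C^(ℓ) D^(ℓ) E^(ℓ)]` built from an `M × N` building
block `Bb`.  Entry in row `i`, column `k` (0-indexed) of `B^(ℓ)`, which has `M^ℓ` rows and
`ℓ·N + 2(ℓ-1)` columns. -/
def blowup (Bb : ℕ → ℕ → Bool) (M N : ℕ) : ℕ → ℕ → ℕ → Bool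
  | 0, _, _ => false
  | 1, i, k => Bb i k
  | ℓ + 2, i, k =>
    let g := blowup Bb M N (ℓ + 1)
    let ml := M ^ (ℓ + 1)              -- number of rows of the previous iterate
    let nl := (ℓ + 1) * N + 2 * ℓ      -- number of columns of the previous iterate
    let s := i / ml                    -- slice index
    let r := i % ml                    -- index within the slice
    if k < nl then
      -- the C block: M-gluing of the previous iterate
      if s % 2 = 0 then g r k
      else if g 0 k = g (ml - 1) k then g r k else !(g r k)
    else if k < nl + N then
      -- the D block: alternating pattern of B[s,k'] and B[s+1,k'] (with B[M+1] = B[M])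
      let k' := k - nl
      if r % 2 = 0 then Bb s k' else Bb (min (s + 1) (M - 1)) k'
    else if k = nl + N then
      -- first column of the E block
      if s % 2 = 0 then decide (r % 2 = 1) else false
    else
      -- second column of the E block
      if s % 2 = 0 then false else decide (r % 2 = 1)

/-!
Write a row of `B^(ℓ+1)` as `m * s + r`: row `r` of the `s`-th copy of `B^(ℓ)`, where
`m = M^ℓ` is odd. For a pair of rows `i < j` the required column is found in one of the three
blocks. If `i` and `j` lie in the same copy, the `C` block inherits it from `B^(ℓ)`: the
column negations of the gluing act identically on both rows and make each column continuous
across the seams. If `j` lies in a later copy and `r` is even, the `D` block carries the first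
Strong Order-Regularity condition of `B` for the two slice indices; if `r` is odd, the pattern
in `D` is swapped, and the second condition of `B` is used instead, except for adjacent copies,
where the `E` column of parity `s` separates row `i` from all later rows. The last two rows
differ in the first `E` column since `M` is odd (in the `D` block if `m = 1`).
-/

def nextRow (m i : ℕ) : ℕ := min (i + 1) (m - 1)

lemma rowSucc_val {m : ℕ} (i : Fin m) : (rowSucc i : ℕ) = nextRow m i := by
  have := i.2
  unfold rowSucc nextRow
  split
  · rw [Fin.val_mk]
    omega
  · omega

def SatConNat (m n : ℕ) (f : ℕ → ℕ → Bool) (i j : ℕ) : Prop :=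
  ∃ k < n, f i k ≠ f (nextRow m i) k ∧ f (nextRow m i) k = f j k ∧
    f j k = f (nextRow m j) k

def OrderRegularNat (m n : ℕ) (f : ℕ → ℕ → Bool) : Prop :=
  (∀ i j, i < j → j < m → SatConNat m n f i j) ∧
    (2 ≤ m → ∃ k < n, f (m - 2) k ≠ f (m - 1) k)

def SORcond2Nat (m n : ℕ) (f : ℕ → ℕ → Bool) : Prop :=
  ∀ i j, i + 1 < j → j < m →
    ∃ k < n, f i k ≠ f (nextRow m i) k ∧ f (nextRow m i) k ≠ f j k ∧
      f j k = f (nextRow m j) k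

section NatIndexed

variable {m n : ℕ} (f : ℕ → ℕ → Bool)

lemma satCon_iff_satConNat (i j : Fin m) :
    SatCon (fun (a : Fin m) (b : Fin n) => f a b) i j ↔ SatConNat m n f i j := by
  simp only [SatCon, SatConNat, rowSucc_val]
  exact ⟨fun ⟨k, hk⟩ => ⟨k, k.2, hk⟩, fun ⟨k, hk, h⟩ => ⟨⟨k, hk⟩, h⟩⟩

lemma orderRegular_iff_orderRegularNat :
    OrderRegular (fun (a : Fin m) (b : Fin n) => f a b) ↔ OrderRegularNat m n f := by
  refine and_congr ⟨fun h i j hij hj => ?_, fun h i j hij => ?_⟩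
    (forall_congr' fun _ =>
      ⟨fun h => ?_, fun ⟨k, hk, h⟩ => Function.ne_iff.2 ⟨⟨k, hk⟩, h⟩⟩)
  · exact (satCon_iff_satConNat f ⟨i, hij.trans hj⟩ ⟨j, hj⟩).1 (h _ _ hij)
  · exact (satCon_iff_satConNat f i j).2 (h i j hij j.2)
  · obtain ⟨k, hk⟩ := Function.ne_iff.1 h
    exact ⟨k, k.2, hk⟩

lemma SORcond2.toNat (h : SORcond2 (fun (a : Fin m) (b : Fin n) => f a b)) :
    SORcond2Nat m n f := by
  intro i j hij hj
  obtain ⟨k, hk⟩ := h ⟨i, by omega⟩ ⟨j, hj⟩ hij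
  simp only [rowSucc_val] at hk
  exact ⟨k, k.2, hk⟩

end NatIndexed

section RowDecomposition

variable {M m s r t q : ℕ}

lemma exists_mul_add_eq {i : ℕ} (hi : i < M * m) : ∃ s < M, ∃ r < m, i = m * s + r := by
  have hm : 0 < m := Nat.pos_of_ne_zero (by rintro rfl; simp at hi)
  exact ⟨i / m, Nat.div_lt_of_lt_mul (by rwa [mul_comm]), i % m, Nat.mod_lt _ hm,
    (Nat.div_add_mod i m).symm⟩

lemma mul_add_div_of_lt (hr : r < m) : (m * s + r) / m = s := by
  rw [Nat.mul_add_div (by omega), Nat.div_eq_of_lt hr, add_zero]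

lemma mul_add_mod_of_lt (hr : r < m) : (m * s + r) % m = r := by
  rw [Nat.mul_add_mod, Nat.mod_eq_of_lt hr]

lemma lt_or_eq_and_lt_of_mul_add_lt (hq : q < m) (h : m * s + r < m * t + q) :
    s < t ∨ s = t ∧ r < q := by
  rcases lt_trichotomy s t with hst | rfl | hts
  · exact Or.inl hst
  · exact Or.inr ⟨rfl, by omega⟩
  · have : m * (t + 1) ≤ m * s := Nat.mul_le_mul_left m hts
    rw [mul_add, mul_one] at this
    omega

lemma nextRow_mul_add (hs : s < M) (hr : r < m) :
    r + 1 < m ∧ nextRow (M * m) (m * s + r) = m * s + (r + 1) ∨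
    r + 1 = m ∧ s + 1 < M ∧ nextRow (M * m) (m * s + r) = m * (s + 1) + 0 ∨
    r + 1 = m ∧ s + 1 = M ∧ nextRow (M * m) (m * s + r) = m * s + r := by
  have hle : m * (s + 1) ≤ M * m := by rw [mul_comm M]; exact Nat.mul_le_mul_left m hs
  unfold nextRow
  rw [mul_add, mul_one] at hle ⊢
  rcases Nat.lt_or_ge (r + 1) m with hr' | hr'
  · exact Or.inl ⟨hr', by omega⟩
  rcases Nat.lt_or_ge (s + 1) M with hs' | hs'
  · have : m * (s + 1 + 1) ≤ M * m := by rw [mul_comm M]; exact Nat.mul_le_mul_left m hs'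
    rw [mul_add, mul_add, mul_one] at this
    exact Or.inr (Or.inl ⟨by omega, hs', by omega⟩)
  · have hM : M = s + 1 := by omega
    subst hM
    rw [add_mul, one_mul, mul_comm s] at *
    exact Or.inr (Or.inr ⟨by omega, rfl, by omega⟩)

end RowDecomposition

/-- Copy `s` of the `M`-gluing of `g` is `g` with column `k` negated iff this is `true`. -/
def gluingSign (g : ℕ → ℕ → Bool) (m s k : ℕ) : Bool :=
  decide (s % 2 = 1) && (g 0 k != g (m - 1) k)

lemma gluingSign_succ (g : ℕ → ℕ → Bool) (m s k : ℕ) :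
    (g (m - 1) k ^^ gluingSign g m s k) = (g 0 k ^^ gluingSign g m (s + 1) k) := by
  unfold gluingSign
  rcases Nat.mod_two_eq_zero_or_one s with hs | hs <;>
    simp only [hs, Nat.succ_mod_two_eq_one_iff] <;>
    cases g 0 k <;> cases g (m - 1) k <;> decide

def blowupStep (M N m n : ℕ) (B g : ℕ → ℕ → Bool) (i k : ℕ) : Bool :=
  if k < n then
    if i / m % 2 = 0 then g (i % m) k
    else if g 0 k = g (m - 1) k then g (i % m) k else !(g (i % m) k)
  else if k < n + N then
    if i % m % 2 = 0 then B (i / m) (k - n) else B (nextRow M (i / m)) (k - n)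
  else if k = n + N then
    if i / m % 2 = 0 then decide (i % m % 2 = 1) else false
  else
    if i / m % 2 = 0 then false else decide (i % m % 2 = 1)

lemma blowup_one (B : ℕ → ℕ → Bool) (M N : ℕ) : blowup B M N 1 = B := rfl

lemma blowup_add_two (B : ℕ → ℕ → Bool) (M N ℓ : ℕ) :
    blowup B M N (ℓ + 2) =
      blowupStep M N (M ^ (ℓ + 1)) ((ℓ + 1) * N + 2 * ℓ) B (blowup B M N (ℓ + 1)) := rfl

section BlowupStep

variable {M N m n : ℕ} {B g : ℕ → ℕ → Bool} {s r k : ℕ}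

lemma blowupStep_C (hr : r < m) (hk : k < n) :
    blowupStep M N m n B g (m * s + r) k = (g r k ^^ gluingSign g m s k) := by
  unfold blowupStep gluingSign
  rw [if_pos hk, mul_add_div_of_lt hr, mul_add_mod_of_lt hr]
  rcases Nat.mod_two_eq_zero_or_one s with hs | hs <;> simp only [hs] <;>
    cases g 0 k <;> cases g (m - 1) k <;> cases g r k <;> decide

lemma blowupStep_D (hr : r < m) (hk : k < N) :
    blowupStep M N m n B g (m * s + r) (n + k) = B (if r % 2 = 0 then s else nextRow M s) k := by
  unfold blowupStep
  rw [if_neg (by omega), if_pos (by omega), mul_add_div_of_lt hr, mul_add_mod_of_lt hr,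
    Nat.add_sub_cancel_left, apply_ite (B · k)]

lemma blowupStep_E {p : ℕ} (hr : r < m) (hp : p < 2) :
    blowupStep M N m n B g (m * s + r) (n + N + p) =
      (decide (s % 2 = p) && decide (r % 2 = 1)) := by
  unfold blowupStep
  rw [if_neg (by omega), if_neg (by omega), mul_add_div_of_lt hr, mul_add_mod_of_lt hr]
  interval_cases p <;> rcases Nat.mod_two_eq_zero_or_one s with hs | hs <;> simp [hs]

lemma blowupStep_C_nextRow (hs : s < M) (hr : r < m) (hk : k < n) :
    blowupStep M N m n B g (nextRow (M * m) (m * s + r)) k =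
      (g (nextRow m r) k ^^ gluingSign g m s k) := by
  rcases nextRow_mul_add hs hr with ⟨hr', h⟩ | ⟨hr', -, h⟩ | ⟨hr', -, h⟩ <;>
    rw [h, blowupStep_C (by omega) hk] <;> unfold nextRow
  · rw [min_eq_left (by omega)]
  · rw [min_eq_right (by omega), ← gluingSign_succ, show m - 1 = r by omega]
  · rw [min_eq_right (by omega), show m - 1 = r by omega]

lemma blowupStep_D_nextRow (hm : Odd m) (hs : s < M) (hr : r < m) (hk : k < N) :
    blowupStep M N m n B g (nextRow (M * m) (m * s + r)) (n + k) =
      B (if r % 2 = 0 then nextRow M s else s) k := by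
  have hm2 := Nat.odd_iff.1 hm
  rcases nextRow_mul_add hs hr with ⟨hr', h⟩ | ⟨hr', hs', h⟩ | ⟨hr', hs', h⟩ <;>
    rw [h, blowupStep_D (by omega) hk]
  · rcases Nat.mod_two_eq_zero_or_one r with hr2 | hr2 <;>
      simp only [hr2, Nat.succ_mod_two_eq_zero_iff] <;> rfl
  · rw [if_pos (by omega), if_pos (by omega), nextRow, min_eq_left (by omega)]
  · rw [if_pos (by omega), if_pos (by omega), nextRow, min_eq_right (by omega),
      show M - 1 = s by omega]

lemma blowupStep_E_nextRow {p : ℕ} (hm : Odd m) (hs : s < M) (hr : r < m) (hp : p < 2)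
    (h : s % 2 ≠ p ∨ r % 2 = 1) :
    blowupStep M N m n B g (nextRow (M * m) (m * s + r)) (n + N + p) = false := by
  have hm2 := Nat.odd_iff.1 hm
  rcases nextRow_mul_add hs hr with ⟨hr', h'⟩ | ⟨hr', hs', h'⟩ | ⟨hr', hs', h'⟩ <;>
    rw [h', blowupStep_E (by omega) hp] <;>
    simp only [Bool.and_eq_false_iff, decide_eq_false_iff_not] <;> omega

lemma blowupStep_D_of_eq_nextRow {t q : ℕ} (hm : Odd m) (ht : t < M) (hq : q < m) (hk : k < N)
    (h : B t k = B (nextRow M t) k) :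
    blowupStep M N m n B g (m * t + q) (n + k) = B t k ∧
      blowupStep M N m n B g (nextRow (M * m) (m * t + q)) (n + k) = B t k := by
  rw [blowupStep_D hq hk, blowupStep_D_nextRow hm ht hq hk]
  split_ifs
  exacts [⟨rfl, h.symm⟩, ⟨h.symm, rfl⟩]

lemma satConNat_blowupStep_same_slice {q : ℕ} (hs : s < M) (hr : r < m) (hq : q < m)
    (hg : SatConNat m n g r q) :
    SatConNat (M * m) (n + N + 2) (blowupStep M N m n B g) (m * s + r) (m * s + q) := by
  obtain ⟨k, hk, hg⟩ := hg
  refine ⟨k, by omega, ?_⟩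
  rw [blowupStep_C_nextRow hs hr hk, blowupStep_C hr hk, blowupStep_C hq hk,
    blowupStep_C_nextRow hs hq hk]
  simpa only [ne_eq, Bool.xor_left_inj] using hg

lemma satConNat_blowupStep_of_even {t q : ℕ} (hm : Odd m) (hs : s < M) (ht : t < M)
    (hr : r < m) (hq : q < m) (hr2 : r % 2 = 0) (hB : SatConNat M N B s t) :
    SatConNat (M * m) (n + N + 2) (blowupStep M N m n B g) (m * s + r) (m * t + q) := by
  obtain ⟨k, hk, hne, hst, htt⟩ := hB
  obtain ⟨hj, hj'⟩ := blowupStep_D_of_eq_nextRow (n := n) (g := g) hm ht hq hk htt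
  refine ⟨n + k, by omega, ?_⟩
  rw [blowupStep_D hr hk, blowupStep_D_nextRow hm hs hr hk, hj, hj', if_pos hr2, if_pos hr2]
  exact ⟨hne, hst, rfl⟩

lemma satConNat_blowupStep_adjacent {q : ℕ} (hm : Odd m) (hs : s + 1 < M) (hr : r < m)
    (hq : q < m) (hr2 : r % 2 = 1) :
    SatConNat (M * m) (n + N + 2) (blowupStep M N m n B g) (m * s + r) (m * (s + 1) + q) := by
  have hp := Nat.mod_lt s two_pos
  have hparity : (s + 1) % 2 ≠ s % 2 := by omega
  refine ⟨n + N + s % 2, by omega, ?_⟩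
  rw [blowupStep_E hr hp, blowupStep_E_nextRow hm (by omega) hr hp (Or.inr hr2),
    blowupStep_E hq hp, blowupStep_E_nextRow hm hs hq hp (Or.inl hparity)]
  simp [hr2, hparity]

lemma satConNat_blowupStep_far {t q : ℕ} (hm : Odd m) (hst : s + 1 < t) (ht : t < M)
    (hr : r < m) (hq : q < m) (hr2 : r % 2 = 1)
    (hB : ∃ k < N, B s k ≠ B (nextRow M s) k ∧ B (nextRow M s) k ≠ B t k ∧
      B t k = B (nextRow M t) k) :
    SatConNat (M * m) (n + N + 2) (blowupStep M N m n B g) (m * s + r) (m * t + q) := by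
  obtain ⟨k, hk, hne, hne', htt⟩ := hB
  obtain ⟨hj, hj'⟩ := blowupStep_D_of_eq_nextRow (n := n) (g := g) hm ht hq hk htt
  have hs : s < M := by omega
  refine ⟨n + k, by omega, ?_⟩
  rw [blowupStep_D hr hk, blowupStep_D_nextRow hm hs hr hk, hj, hj', if_neg (by omega),
    if_neg (by omega)]
  exact ⟨Ne.symm hne, (Bool.eq_not_of_ne hne).trans (Bool.eq_not_of_ne hne'.symm).symm, rfl⟩

lemma satConNat_blowupStep (hm : Odd m) (hB : ∀ s t, s < t → t < M → SatConNat M N B s t)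
    (hB₂ : SORcond2Nat M N B) (hg : ∀ r q, r < q → q < m → SatConNat m n g r q)
    {i j : ℕ} (hij : i < j) (hj : j < M * m) :
    SatConNat (M * m) (n + N + 2) (blowupStep M N m n B g) i j := by
  obtain ⟨t, ht, q, hq, rfl⟩ := exists_mul_add_eq hj
  obtain ⟨s, hs, r, hr, rfl⟩ := exists_mul_add_eq (hij.trans hj)
  rcases lt_or_eq_and_lt_of_mul_add_lt hq hij with hst | ⟨rfl, hrq⟩
  · rcases Nat.mod_two_eq_zero_or_one r with hr2 | hr2
    · exact satConNat_blowupStep_of_even hm hs ht hr hq hr2 (hB s t hst ht)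
    rcases (Nat.succ_le_of_lt hst).eq_or_lt with rfl | hst'
    · exact satConNat_blowupStep_adjacent hm ht hr hq hr2
    · exact satConNat_blowupStep_far hm hst' ht hr hq hr2 (hB₂ s t hst' ht)
  · exact satConNat_blowupStep_same_slice hs hr hq (hg r q hrq hq)

lemma blowupStep_last_rows_ne (hM : Odd M) (hm : Odd m)
    (hB : 2 ≤ M → ∃ k < N, B (M - 2) k ≠ B (M - 1) k) (h2 : 2 ≤ M * m) :
    ∃ k < n + N + 2,
      blowupStep M N m n B g (M * m - 2) k ≠ blowupStep M N m n B g (M * m - 1) k := by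
  have hM2 := Nat.odd_iff.1 hM
  have hm2 := Nat.odd_iff.1 hm
  rcases Nat.lt_or_ge m 3 with hm1 | hm3
  · obtain rfl : m = 1 := by omega
    obtain ⟨k, hk, hne⟩ := hB (by omega)
    refine ⟨n + k, by omega, ?_⟩
    have hrow : ∀ i, i = 1 * i + 0 := fun i => by omega
    rwa [mul_one, hrow (M - 2), hrow (M - 1), blowupStep_D one_pos hk, blowupStep_D one_pos hk,
      if_pos (Nat.zero_mod 2), if_pos (Nat.zero_mod 2)]
  · have hrows : M * m - 2 = m * (M - 1) + (m - 2) ∧ M * m - 1 = m * (M - 1) + (m - 1) := by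
      obtain ⟨M', rfl⟩ : ∃ M', M = M' + 1 := ⟨M - 1, by omega⟩
      rw [add_mul, one_mul, Nat.add_sub_cancel, mul_comm M']
      omega
    refine ⟨n + N + 0, by omega, ?_⟩
    rw [hrows.1, hrows.2, blowupStep_E (by omega) two_pos, blowupStep_E (by omega) two_pos,
      show (M - 1) % 2 = 0 by omega, show (m - 2) % 2 = 1 by omega,
      show (m - 1) % 2 = 0 by omega]
    decide

lemma orderRegularNat_blowupStep (hM : Odd M) (hm : Odd m) (hB : OrderRegularNat M N B)
    (hB₂ : SORcond2Nat M N B) (hg : OrderRegularNat m n g) :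
    OrderRegularNat (M * m) (n + N + 2) (blowupStep M N m n B g) :=
  ⟨fun _ _ hij hj => satConNat_blowupStep hm hB.1 hB₂ hg.1 hij hj,
    blowupStep_last_rows_ne hM hm hB.2⟩

end BlowupStep

lemma orderRegularNat_blowup {M N : ℕ} {B : ℕ → ℕ → Bool} (hM : Odd M)
    (hB : OrderRegularNat M N B) (hB₂ : SORcond2Nat M N B) (ℓ : ℕ) :
    OrderRegularNat (M ^ (ℓ + 1)) ((ℓ + 1) * N + 2 * ℓ) (blowup B M N (ℓ + 1)) := by
  induction ℓ with
  | zero => simpa [blowup_one] using hB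
  | succ ℓ ih =>
    rw [blowup_add_two, pow_succ', show (ℓ + 1 + 1) * N + 2 * (ℓ + 1) =
      (ℓ + 1) * N + 2 * ℓ + N + 2 by ring]
    exact orderRegularNat_blowupStep hM hM.pow hB hB₂ ih

theorem stmt10 {M N : ℕ} (hM : Odd M) (Bb : ℕ → ℕ → Bool)
    (hSOR : StronglyOrderRegular (fun (i : Fin M) (k : Fin N) => Bb i.1 k.1)) :
    ∀ ℓ : ℕ, 1 ≤ ℓ →
      OrderRegular (fun (i : Fin (M ^ ℓ)) (k : Fin (ℓ * N + 2 * (ℓ - 1))) =>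
        blowup Bb M N ℓ i.1 k.1) := by
  intro ℓ hℓ
  obtain ⟨ℓ, rfl⟩ := Nat.exists_eq_add_of_le' hℓ
  rw [orderRegular_iff_orderRegularNat, Nat.add_sub_cancel]
  exact orderRegularNat_blowup hM ((orderRegular_iff_orderRegularNat Bb).1 hSOR.1)
    (hSOR.2.toNat Bb) ℓ
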